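/- For every natuarl number n ≥ 0 and every integer i with 0 ≤ i ≤ n, the coefficient a(n,i) of q^i in the polynomial (q;q)_n = ∏_{k=1}^n (1 - q^k) equals (-1)^j if i = j(3j-1)/2 or i = j(3j+1)/2 for some natural number j, and equals 0 otherwise. (In particular, the first n coefficients of (q;q)_n agree with the series in Euler's pentagonal number theorem.) -/

import Mathlib

open Polynomial

/-- `a n i` is the coefficient of `q^i` in `(q;q)_n = ∏_{k=1}^n (1 - q^k)` over `ℤ`. -/
noncomputable def a (n i : ℕ) : ℤ :=
  (∏ k ∈ Finset.Icc 1 n, (1 - (X : Polynomial ℤ) ^ k)).coeff i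

/-- `M n` is the maximum of `|a n i|` over `0 ≤ i ≤ n(n+1)/2`. -/
noncomputable def M (n : ℕ) : ℕ :=
  (Finset.range (n * (n + 1) / 2 + 1)).sup fun i => (a n i).natAbs

/-- `L n` is the least index `i` with `|a n i| = M n`. -/
noncomputable def L (n : ℕ) : ℕ :=
  sInf {i : ℕ | (a n i).natAbs = M n}


/-!
By Euler's pentagonal number theorem (`PowerSeries.coeff_prod_one_sub_X_pow_eventually_eq`), the
coefficient of `q^i` in `∏_{k ≥ 1} (1 - q^k)` is `(-1)^j` at the pentagonal numbers `i = j(3j ∓ 1)/2`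
and `0` elsewhere. Every factor `1 - q^k` with `k > n` is `≡ 1 mod q^(n+1)`, so dropping these factors
does not change the coefficients of `q^i` for `i ≤ n`.
-/

namespace PowerSeries

variable {R : Type*} [CommRing R]

theorem coeff_mul_prod_one_sub_X_pow_of_le {i : ℕ} {s : Finset ℕ} (hs : ∀ k ∈ s, i ≤ k)
    (P : R⟦X⟧) : coeff i (P * ∏ k ∈ s, (1 - X ^ (k + 1))) = coeff i P := by
  induction s using Finset.induction_on generalizing P with
  | empty => simp
  | insert k s hk ih =>
    rw [Finset.prod_insert hk, ← mul_assoc, ih (fun l hl => hs l (Finset.mem_insert_of_mem hl)),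
      mul_sub, mul_one, map_sub, coeff_mul_X_pow', if_neg, sub_zero]
    have := hs k (Finset.mem_insert_self k s)
    omega

theorem coeff_prod_range_one_sub_X_pow_of_le {i n : ℕ} (hi : i ≤ n) :
    coeff i (∏ k ∈ Finset.range n, (1 - X ^ (k + 1) : R⟦X⟧)) = coeff i (pentagonalSeries R) := by
  obtain ⟨s, hs, hsub⟩ :=
    ((coeff_prod_one_sub_X_pow_eventually_eq R i).and (Filter.eventually_ge_atTop _)).exists
  rw [← hs, ← Finset.prod_sdiff hsub, mul_comm, coeff_mul_prod_one_sub_X_pow_of_le]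
  intro k hk
  have := (Finset.mem_sdiff.1 hk).2
  simp only [Finset.mem_range, not_lt] at this
  omega

end PowerSeries

theorem a_eq_coeff_pentagonalSeries {n i : ℕ} (hi : i ≤ n) :
    a n i = PowerSeries.coeff i (PowerSeries.pentagonalSeries ℤ) := by
  rw [a, ← Polynomial.coeff_coe, ← PowerSeries.coeff_prod_range_one_sub_X_pow_of_le hi,
    Finset.range_eq_Ico, Finset.prod_Ico_add' (fun k => 1 - PowerSeries.X ^ k : ℕ → PowerSeries ℤ),
    zero_add, Finset.Ico_add_one_right_eq_Icc]
  congr 1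
  rw [← Polynomial.coeToPowerSeries.ringHom_apply, map_prod]
  simp

theorem pentagonal_natCast_eq_iff {i j : ℕ} : pentagonal j = i ↔ 2 * i = j * (3 * j - 1) := by
  rcases j with _ | j
  · simp [show pentagonal 0 = 0 from rfl, eq_comm]
  · have h := two_mul_natCast_pentagonal (j + 1)
    zify [show 1 ≤ 3 * (j + 1) by omega]
    constructor <;> intro <;> linarith

theorem pentagonal_neg_natCast_eq_iff {i j : ℕ} :
    pentagonal (-j) = i ↔ 2 * i = j * (3 * j + 1) := by
  have h := two_mul_natCast_pentagonal_neg j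
  zify
  constructor <;> intro <;> linarith

theorem mem_range_pentagonal {i : ℕ} :
    i ∈ Set.range pentagonal ↔ ∃ j : ℕ, 2 * i = j * (3 * j - 1) ∨ 2 * i = j * (3 * j + 1) := by
  simp only [← pentagonal_natCast_eq_iff, ← pentagonal_neg_natCast_eq_iff]
  constructor
  · rintro ⟨k, rfl⟩
    obtain ⟨j, rfl | rfl⟩ := Int.eq_nat_or_neg k
    exacts [⟨j, .inl rfl⟩, ⟨j, .inr rfl⟩]
  · rintro ⟨j, h | h⟩
    exacts [⟨j, h⟩, ⟨-j, h⟩]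

/-- The first `n+1` coefficients of `(q;q)_n` are given by Euler's pentagonal number
theorem: `a n i = (-1)^j` if `i = j(3j-1)/2` or `i = j(3j+1)/2` for some `j : ℕ`,
and `a n i = 0` otherwise. -/
theorem stmt_0 (n : ℕ) (i : ℕ) (hi : i ≤ n) :
    (∀ j : ℕ, (2 * i = j * (3 * j - 1) ∨ 2 * i = j * (3 * j + 1)) → a n i = (-1) ^ j) ∧
    ((¬ ∃ j : ℕ, 2 * i = j * (3 * j - 1) ∨ 2 * i = j * (3 * j + 1)) → a n i = 0) := by
  rw [a_eq_coeff_pentagonalSeries hi]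
  refine ⟨fun j hj => ?_, fun h =>
    PowerSeries.coeff_pentagonalSeries_eq_zero ℤ (mem_range_pentagonal.not.2 h)⟩
  rw [← pentagonal_natCast_eq_iff, ← pentagonal_neg_natCast_eq_iff] at hj
  rcases hj with rfl | rfl
  · rw [PowerSeries.coeff_pentagonalSeries_pentagonal]
    exact Int.coe_negOnePow_natCast j
  · rw [PowerSeries.coeff_pentagonalSeries_pentagonal, Int.negOnePow_neg]
    exact Int.coe_negOnePow_natCast j
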